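/- arXiv:1703.05909 — 7 statements merged into one kernel-verified Lean document; each statement's English description precedes it below -/
import Mathlib

section
/- For pairwise coprime integers u and v, gcd(u⁴ + 2u³v, v⁴ + 2v³u) = gcd(3, u - v). -/
/-!
Write `A = u³(u + 2v)` and `B = v³(v + 2u)`. A common divisor `d` of `A` and `B` is coprime to
`u` (since `B ≡ v⁴` modulo `u`) and to `v`, so it divides `u + 2v` and `v + 2u`; their difference is
`u - v`, and `3u`, `3v` are combinations of them, so `d ∣ 3` by coprimality. Conversely
`u + 2v = (u - v) + 3v` and `v + 2u = 3u - (u - v)`.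
-/

section CommRing

variable {R : Type*} [CommRing R] {d u v : R}

theorem IsCoprime.pow_mul_add_mul (huv : IsCoprime u v) (n : ℕ) (a : R) :
    IsCoprime u (v ^ n * (v + a * u)) := by
  have h : v ^ n * (v + a * u) = v ^ (n + 1) + u * (a * v ^ n) := by ring
  rw [h]
  exact huv.pow_right.add_mul_left_right _

theorem IsCoprime.dvd_add_mul_of_dvd_pow_mul {m n : ℕ} {a b : R} (huv : IsCoprime u v)
    (hu : d ∣ u ^ m * (u + a * v)) (hv : d ∣ v ^ n * (v + b * u)) : d ∣ u + a * v :=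
  have hdu : IsCoprime d u := ((huv.pow_mul_add_mul n b).of_isCoprime_of_dvd_right hv).symm
  hdu.pow_right.dvd_of_dvd_mul_left hu

theorem IsCoprime.dvd_pow_mul_add_two_mul_iff {m n : ℕ} (huv : IsCoprime u v) :
    d ∣ u ^ m * (u + 2 * v) ∧ d ∣ v ^ n * (v + 2 * u) ↔ d ∣ 3 ∧ d ∣ u - v := by
  constructor
  · rintro ⟨hu, hv⟩
    have h₁ : d ∣ u + 2 * v := huv.dvd_add_mul_of_dvd_pow_mul hu hv
    have h₂ : d ∣ v + 2 * u := huv.symm.dvd_add_mul_of_dvd_pow_mul hv hu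
    obtain ⟨x, y, hxy⟩ := huv
    have h₃ : (3 : R) = (2 * x - y) * (v + 2 * u) + (2 * y - x) * (u + 2 * v) := by
      linear_combination -3 * hxy
    refine ⟨?_, ?_⟩
    · rw [h₃]
      exact dvd_add (dvd_mul_of_dvd_right h₂ _) (dvd_mul_of_dvd_right h₁ _)
    · rw [show u - v = (v + 2 * u) - (u + 2 * v) by ring]
      exact dvd_sub h₂ h₁
  · rintro ⟨h₃, huv'⟩
    refine ⟨dvd_mul_of_dvd_right ?_ _, dvd_mul_of_dvd_right ?_ _⟩
    · rw [show u + 2 * v = (u - v) + 3 * v by ring]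
      exact dvd_add huv' (dvd_mul_of_dvd_left h₃ _)
    · rw [show v + 2 * u = 3 * u - (u - v) by ring]
      exact dvd_sub (dvd_mul_of_dvd_left h₃ _) huv'

end CommRing

theorem Int.gcd_eq_gcd_of_forall_dvd_iff {a b c e : ℤ}
    (h : ∀ d : ℤ, d ∣ a ∧ d ∣ b ↔ d ∣ c ∧ d ∣ e) : Int.gcd a b = Int.gcd c e := by
  apply Nat.dvd_antisymm
  · obtain ⟨hc, he⟩ := (h _).1 ⟨Int.gcd_dvd_left a b, Int.gcd_dvd_right a b⟩
    exact Int.dvd_gcd hc he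
  · obtain ⟨ha, hb⟩ := (h _).2 ⟨Int.gcd_dvd_left c e, Int.gcd_dvd_right c e⟩
    exact Int.dvd_gcd ha hb

theorem stmt3 (u v : ℤ) (huv : IsCoprime u v) :
    Int.gcd (u ^ 4 + 2 * u ^ 3 * v) (v ^ 4 + 2 * v ^ 3 * u) = Int.gcd 3 (u - v) := by
  have hA : u ^ 4 + 2 * u ^ 3 * v = u ^ 3 * (u + 2 * v) := by ring
  have hB : v ^ 4 + 2 * v ^ 3 * u = v ^ 3 * (v + 2 * u) := by ring
  rw [hA, hB]
  exact Int.gcd_eq_gcd_of_forall_dvd_iff fun _ => huv.dvd_pow_mul_add_two_mul_iff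
end

section
/- Let (a,b,c) be a positive primitive solution to a² + b² = 2c² and n a square-free integer. Then none of the three pairs [-a²n, b²n], [a²n, 2c²n], [-b²n, -2c²n] consists of two squares of integers; consequently (by Ono's criterion) E⁽ⁿ⁾: y² = x(x - a²n)(x + b²n) has no rational point of order 4. -/
lemma keyN (N M R : ℕ) (hN : Squarefree N) (hM : M ≠ 0) (h : M ^ 2 * N = R ^ 2) : N = 1 := by
  have hN0 : N ≠ 0 := hN.ne_zero
  have hR : R ≠ 0 := by
    rintro rfl
    simp only [pow_two, mul_eq_zero] at h
    rcases mul_eq_zero.mp h with h1 | h1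
    · exact hM (by rcases mul_eq_zero.mp h1 with h2 | h2 <;> exact h2)
    · exact hN0 h1
  rw [Nat.eq_one_iff_not_exists_prime_dvd]
  intro p hp hpN
  have hle := (Nat.squarefree_iff_factorization_le_one hN0).mp hN p
  have hf : (M ^ 2 * N).factorization p = (R ^ 2).factorization p := by rw [h]
  rw [Nat.factorization_mul (pow_ne_zero 2 hM) hN0, Nat.factorization_pow,
    Nat.factorization_pow] at hf
  have h1 : 1 ≤ N.factorization p :=
    (Nat.Prime.factorization_pos_of_dvd hp hN0 hpN)
  have heq : N.factorization p = 1 := le_antisymm hle h1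
  simp only [Finsupp.add_apply, Finsupp.smul_apply, smul_eq_mul] at hf
  omega

lemma keyZ (n m r : ℤ) (hn : Squarefree n) (hm : m ≠ 0) (h : m ^ 2 * n = r ^ 2) : n = 1 := by
  have hn0 : n ≠ 0 := hn.ne_zero
  have hnpos : 0 < n := by
    rcases lt_or_gt_of_ne hn0 with hneg | hpos
    · exfalso
      nlinarith [sq_nonneg r, sq_nonneg m, sq_abs m, abs_pos.mpr hm]
    · exact hpos
  have hN : (m.natAbs) ^ 2 * n.natAbs = r.natAbs ^ 2 := by
    have := congrArg Int.natAbs h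
    rwa [Int.natAbs_mul, Int.natAbs_pow, Int.natAbs_pow] at this
  have := keyN n.natAbs m.natAbs r.natAbs (Int.squarefree_natAbs.mpr hn)
    (Int.natAbs_ne_zero.mpr hm) hN
  omega

lemma two_mul_sq_ne_sq (c s : ℤ) (hc : c ≠ 0) : 2 * c ^ 2 ≠ s ^ 2 := by
  intro h
  have h2 : c ^ 2 * 2 = s ^ 2 := by linarith
  have := keyZ 2 c s Int.prime_two.squarefree hc h2
  omega

theorem stmt6 (a b c n : ℤ) (ha : 0 < a) (hb : 0 < b) (hc : 0 < c)
    (hprim : Int.gcd a (Int.gcd b c) = 1) (habc : a ^ 2 + b ^ 2 = 2 * c ^ 2)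
    (hn : Squarefree n) :
    (¬ ∃ r s : ℤ, -(a ^ 2 * n) = r ^ 2 ∧ b ^ 2 * n = s ^ 2) ∧
    (¬ ∃ r s : ℤ, a ^ 2 * n = r ^ 2 ∧ 2 * c ^ 2 * n = s ^ 2) ∧
    (¬ ∃ r s : ℤ, -(b ^ 2 * n) = r ^ 2 ∧ -(2 * c ^ 2 * n) = s ^ 2) := by
  have hn0 : n ≠ 0 := hn.ne_zero
  refine ⟨?_, ?_, ?_⟩
  · rintro ⟨r, s, h1, h2⟩
    -- a²n = -r² ≤ 0, b²n = s² ≥ 0 ⇒ contradiction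
    rcases lt_or_gt_of_ne hn0 with hneg | hpos
    · nlinarith [sq_nonneg s, sq_nonneg b]
    · nlinarith [sq_nonneg r, sq_nonneg a]
  · rintro ⟨r, s, h1, h2⟩
    have hpos : 0 < n := by
      rcases lt_or_gt_of_ne hn0 with hneg | hpos
      · nlinarith [sq_nonneg r, sq_nonneg a]
      · exact hpos
    have hn1 : n = 1 := keyZ n a r hn ha.ne' h1
    subst hn1
    exact two_mul_sq_ne_sq c s hc.ne' (by linarith)
  · rintro ⟨r, s, h1, h2⟩
    have hneg : n < 0 := by
      rcases lt_or_gt_of_ne hn0 with hneg | hpos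
      · exact hneg
      · nlinarith [sq_nonneg r, sq_nonneg b]
    have hn1 : -n = 1 := keyZ (-n) b r (fun x hx => hn x (dvd_neg.mp hx)) hb.ne' (by linarith)
    have : n = -1 := by omega
    subst this
    exact two_mul_sq_ne_sq c s hc.ne' (by linarith)
end

section
/- Let B be a symmetric k×k matrix over F₂ with rank k - 2 and B·z₀ = 0 where z₀ is the all-ones vector. Let B' be the (k-1)×(k-1) matrix obtained by deleting the last row and column of B. Then rank B' = k - 2, and the map B ↦ B' is a bijection from the set of symmetric k×k F₂-matrices of rank k-2 annihilating z₀ onto the set of symmetric (k-1)×(k-1) F₂-matrices of rank k-2. -/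
open Matrix Finset

namespace Stmt8

variable {m : ℕ}

/-- Extension matrix: rows indexed by Fin (m+1), columns by Fin (m+2);
row a has ones at castSucc a and at last. -/
def P (m : ℕ) : Matrix (Fin (m+1)) (Fin (m+2)) (ZMod 2) :=
  fun a i => if i = a.castSucc ∨ i = Fin.last (m+1) then 1 else 0

/-- Inclusion matrix: Q i a = 1 iff i = castSucc a. -/
def Q (m : ℕ) : Matrix (Fin (m+2)) (Fin (m+1)) (ZMod 2) :=
  fun i a => if i = a.castSucc then 1 else 0

lemma P_castSucc (a i : Fin (m+1)) : P m a i.castSucc = if a = i then 1 else 0 := by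
  simp [P, Fin.castSucc_inj, (Fin.castSucc_lt_last i).ne, eq_comm]

lemma P_last (a : Fin (m+1)) : P m a (Fin.last (m+1)) = 1 := by
  simp [P]

lemma Q_eq (i : Fin (m+2)) (a : Fin (m+1)) : Q m i a = if i = a.castSucc then 1 else 0 := rfl

/-- submatrix as a product. -/
lemma submatrix_eq_mul (B : Matrix (Fin (m+2)) (Fin (m+2)) (ZMod 2)) :
    (Q m)ᵀ * B * Q m = B.submatrix Fin.castSucc Fin.castSucc := by
  ext a b
  simp [Matrix.mul_apply, Q, transpose_apply, ite_mul, mul_ite]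

noncomputable def ext (C : Matrix (Fin (m+1)) (Fin (m+1)) (ZMod 2)) :
    Matrix (Fin (m+2)) (Fin (m+2)) (ZMod 2) := (P m)ᵀ * C * P m

lemma ext_cc (C : Matrix (Fin (m+1)) (Fin (m+1)) (ZMod 2)) (i j : Fin (m+1)) :
    ext C i.castSucc j.castSucc = C i j := by
  simp [ext, Matrix.mul_apply, transpose_apply, P_castSucc, ite_mul, mul_ite]

lemma ext_cl (C : Matrix (Fin (m+1)) (Fin (m+1)) (ZMod 2)) (i : Fin (m+1)) :
    ext C i.castSucc (Fin.last (m+1)) = ∑ b, C i b := by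
  simp [ext, Matrix.mul_apply, transpose_apply, P_castSucc, P_last, ite_mul, mul_ite]

lemma ext_lc (C : Matrix (Fin (m+1)) (Fin (m+1)) (ZMod 2)) (j : Fin (m+1)) :
    ext C (Fin.last (m+1)) j.castSucc = ∑ a, C a j := by
  simp [ext, Matrix.mul_apply, transpose_apply, P_castSucc, P_last, ite_mul, mul_ite]

lemma ext_ll (C : Matrix (Fin (m+1)) (Fin (m+1)) (ZMod 2)) :
    ext C (Fin.last (m+1)) (Fin.last (m+1)) = ∑ a, ∑ b, C a b := by
  simp [ext, Matrix.mul_apply, transpose_apply, P_last]; exact Finset.sum_comm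

end Stmt8

namespace Stmt8

lemma key (B : Matrix (Fin (m+2)) (Fin (m+2)) (ZMod 2)) (hs : B.IsSymm)
    (hz : B.mulVec (fun _ => 1) = 0) :
    B = ext (B.submatrix Fin.castSucc Fin.castSucc) := by
  have hrow : ∀ i, ∑ j, B i j = 0 := by
    intro i
    have := congrFun hz i
    simpa [Matrix.mulVec, dotProduct] using this
  have hlast : ∀ i : Fin (m+2), B i (Fin.last (m+1)) = ∑ j : Fin (m+1), B i j.castSucc := by
    intro i
    have h := hrow i
    rw [Fin.sum_univ_castSucc] at h
    have h2 := eq_neg_of_add_eq_zero_right h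
    rwa [CharTwo.neg_eq] at h2
  have hsym : ∀ i j, B i j = B j i := fun i j => (Matrix.IsSymm.apply hs j i)
  ext i j
  induction j using Fin.lastCases with
  | last =>
    induction i using Fin.lastCases with
    | last =>
      rw [ext_ll, hlast]
      refine Finset.sum_congr rfl fun j _ => ?_
      rw [hsym, hlast]
      simp [Matrix.submatrix_apply]
    | cast i =>
      rw [ext_cl, hlast]
      simp [Matrix.submatrix_apply]
  | cast j =>
    induction i using Fin.lastCases with
    | last =>
      rw [ext_lc, hsym, hlast]
      refine Finset.sum_congr rfl fun a _ => ?_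
      simp [Matrix.submatrix_apply, hsym j.castSucc a.castSucc]
    | cast i =>
      rw [ext_cc]
      simp [Matrix.submatrix_apply]

lemma ext_isSymm (C : Matrix (Fin (m+1)) (Fin (m+1)) (ZMod 2)) (hC : C.IsSymm) :
    (ext C).IsSymm := by
  unfold Matrix.IsSymm ext
  rw [Matrix.transpose_mul, Matrix.transpose_mul, Matrix.transpose_transpose, hC.eq,
    Matrix.mul_assoc]

lemma P_mulVec_one : (P m).mulVec (fun _ => 1) = 0 := by
  funext a
  have : ∀ j : Fin (m+1), P m a j.castSucc = if a = j then 1 else 0 := P_castSucc a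
  simp [Matrix.mulVec, dotProduct, Fin.sum_univ_castSucc, this, P_last]
  exact CharTwo.add_self_eq_zero 1

lemma ext_mulVec_one (C : Matrix (Fin (m+1)) (Fin (m+1)) (ZMod 2)) :
    (ext C).mulVec (fun _ => 1) = 0 := by
  unfold ext
  rw [← Matrix.mulVec_mulVec, ← Matrix.mulVec_mulVec, P_mulVec_one]
  simp

lemma submatrix_ext (C : Matrix (Fin (m+1)) (Fin (m+1)) (ZMod 2)) :
    (ext C).submatrix Fin.castSucc Fin.castSucc = C := by
  ext i j
  simpa [Matrix.submatrix_apply] using ext_cc C i j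

lemma rank_ext (C : Matrix (Fin (m+1)) (Fin (m+1)) (ZMod 2)) :
    (ext C).rank = C.rank := by
  refine le_antisymm ?_ ?_
  · exact le_trans (Matrix.rank_mul_le_left _ _) (Matrix.rank_mul_le_right _ _)
  · calc C.rank = ((Q m)ᵀ * ext C * Q m).rank := by
          rw [submatrix_eq_mul, submatrix_ext]
      _ ≤ (ext C).rank :=
          le_trans (Matrix.rank_mul_le_left _ _) (Matrix.rank_mul_le_right _ _)

end Stmt8

theorem stmt8 (m : ℕ) :
    (∀ B : Matrix (Fin (m + 2)) (Fin (m + 2)) (ZMod 2),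
      B.IsSymm → B.mulVec (fun _ => 1) = 0 → B.rank = m →
        (B.submatrix Fin.castSucc Fin.castSucc).rank = m) ∧
    Set.BijOn (fun B : Matrix (Fin (m + 2)) (Fin (m + 2)) (ZMod 2) =>
        B.submatrix Fin.castSucc Fin.castSucc)
      {B | B.IsSymm ∧ B.mulVec (fun _ => 1) = 0 ∧ B.rank = m}
      {C : Matrix (Fin (m + 1)) (Fin (m + 1)) (ZMod 2) | C.IsSymm ∧ C.rank = m} := by
  have part1 : ∀ B : Matrix (Fin (m + 2)) (Fin (m + 2)) (ZMod 2),
      B.IsSymm → B.mulVec (fun _ => 1) = 0 → B.rank = m →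
        (B.submatrix Fin.castSucc Fin.castSucc).rank = m := by
    intro B hs hz hr
    have hk := Stmt8.key B hs hz
    have h2 := Stmt8.rank_ext (B.submatrix Fin.castSucc Fin.castSucc)
    rw [← hk] at h2
    rw [← h2]; exact hr
  refine ⟨part1, ⟨?_, ?_, ?_⟩⟩
  · rintro B ⟨hs, hz, hr⟩
    exact ⟨hs.submatrix _, part1 B hs hz hr⟩
  · rintro B₁ ⟨hs₁, hz₁, -⟩ B₂ ⟨hs₂, hz₂, -⟩ heq
    rw [Stmt8.key B₁ hs₁ hz₁, Stmt8.key B₂ hs₂ hz₂]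
    simp only at heq
    rw [heq]
  · rintro C ⟨hCs, hCr⟩
    exact ⟨Stmt8.ext C, ⟨Stmt8.ext_isSymm C hCs, Stmt8.ext_mulVec_one C,
      by rw [Stmt8.rank_ext]; exact hCr⟩, Stmt8.submatrix_ext C⟩
end

section
/- Let d, d' be odd positive coprime integers with dd' ≡ 1 (mod 8), and suppose (α, β, γ) is an integer solution to dα² + d'β² = γ² with α odd and β even. Then (ᾱ, β̄, γ̄) = (d'α - 2d'β - dα, dβ - 2dα - d'β, (d + d')γ) is also a solution to dX² + d'Y² = Z², with 4 | ᾱ and β̄ ≡ 2 (mod 4). -/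
theorem stmt12 (d d' α β γ : ℤ) (hd : Odd d) (hd' : Odd d') (hdpos : 0 < d)
    (hd'pos : 0 < d') (hcop : IsCoprime d d') (h8 : d * d' % 8 = 1)
    (hsol : d * α ^ 2 + d' * β ^ 2 = γ ^ 2) (hα : Odd α) (hβ : Even β) :
    d * (d' * α - 2 * d' * β - d * α) ^ 2 + d' * (d * β - 2 * d * α - d' * β) ^ 2 =
        ((d + d') * γ) ^ 2 ∧
      (4 : ℤ) ∣ (d' * α - 2 * d' * β - d * α) ∧
      (d * β - 2 * d * α - d' * β) % 4 = 2 := by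
  obtain ⟨m, hm⟩ := hd
  obtain ⟨a, ha⟩ := hα
  obtain ⟨b, hb⟩ := hβ
  -- d * d ≡ 1 mod 8
  have hodd2 : ¬ (2:ℤ) ∣ d := by omega
  have hcop2 : IsCoprime (2:ℤ) d := (Int.prime_two.coprime_iff_not_dvd).2 hodd2
  have hcop8 : IsCoprime (8:ℤ) d := by
    have := hcop2.pow_left (m := 3)
    norm_num at this
    exact this
  have hdd : (8:ℤ) ∣ d * d - 1 := by
    have h2 : Even (m * (m + 1)) := Int.even_mul_succ_self m
    obtain ⟨t, ht⟩ := h2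
    have : d * d - 1 = 8 * t := by subst hm; nlinarith [ht]
    exact ⟨t, this⟩
  have hdd' : (8:ℤ) ∣ d * d' - 1 := by omega
  have h8d : (8:ℤ) ∣ d * (d' - d) := by
    have : d * (d' - d) = (d * d' - 1) - (d * d - 1) := by ring
    rw [this]
    exact dvd_sub hdd' hdd
  have hk : (8:ℤ) ∣ (d' - d) := hcop8.dvd_of_dvd_mul_left h8d
  obtain ⟨k, hk⟩ := hk
  have hd' : d' = d + 8 * k := by omega
  refine ⟨by linear_combination (d + d')^2 * hsol, ⟨2 * k * α - d' * b, by rw [hd', hb]; ring⟩, ?_⟩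
  have hval : d * β - 2 * d * α - d' * β = 4 * (-4 * k * b - 2 * m * a - m - a - 1) + 2 := by
    rw [hd', hb, hm, ha]; ring
  omega
end

section
/- Let n ≡ 1 (mod 8) be a positive square-free integer and let (α, β, γ) be a primitive integer solution to α² + nβ² = 2γ². If d is a divisor of n with d ≡ -1 (mod 8), then (-n/γ) = 1 as a Jacobi symbol, i.e., -n is a quadratic residue modulo every odd prime divisor of γ; moreover the Jacobi symbol (-1/γ) equals the Jacobi symbol (γ/n). -/
/-!
Any common divisor `g` of `β` and `γ` has `g² ∣ α²`, hence `g ∣ α`, so primitivity makes `β` and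
`γ` coprime; a common divisor `h` of `α` and `γ` then has `h² ∣ nβ²` with `h` coprime to `β`, so
`h² ∣ n` and squarefreeness makes `α` and `γ` coprime. Modulo any divisor `m` of `γ` the equation
reads `-n β² ≡ α²` with `α, β` units, whence `(-n/m) = 1`. Splitting `(-n/|γ|) = 1` as
`(-1/|γ|) (n/|γ|) = 1` and applying reciprocity for `n ≡ 1 (mod 4)` gives the last claim.
-/

namespace SqAddMulSq

variable {n α β γ k : ℤ}

theorem isCoprime_right (hsol : α ^ 2 + n * β ^ 2 = k * γ ^ 2)
    (hprim : Int.gcd α (Int.gcd β γ) = 1) : IsCoprime β γ := by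
  set g : ℤ := (Int.gcd β γ : ℤ) with hg
  have hgβ : g ∣ β := Int.gcd_dvd_left β γ
  have hgγ : g ∣ γ := Int.gcd_dvd_right β γ
  have hgα : g ∣ α := by
    rw [← Int.pow_dvd_pow_iff two_ne_zero, show α ^ 2 = k * γ ^ 2 - n * β ^ 2 by linarith]
    exact dvd_sub (dvd_mul_of_dvd_right (pow_dvd_pow_of_dvd hgγ 2) k)
      (dvd_mul_of_dvd_right (pow_dvd_pow_of_dvd hgβ 2) n)
  have : Int.gcd β γ ∣ 1 := hprim ▸ Int.dvd_gcd hgα hg.symm.dvd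
  exact Int.isCoprime_iff_gcd_eq_one.mpr (Nat.dvd_one.mp this)

theorem isCoprime_left (hsf : Squarefree n) (hsol : α ^ 2 + n * β ^ 2 = k * γ ^ 2)
    (hprim : Int.gcd α (Int.gcd β γ) = 1) : IsCoprime α γ := by
  set h : ℤ := (Int.gcd α γ : ℤ)
  have hhα : h ∣ α := Int.gcd_dvd_left α γ
  have hhγ : h ∣ γ := Int.gcd_dvd_right α γ
  have hhβ : IsCoprime (h ^ 2) β :=
    ((isCoprime_right hsol hprim).of_isCoprime_of_dvd_right hhγ).symm.pow_left
  have hsq : h ^ 2 ∣ β ^ 2 * n := by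
    rw [show β ^ 2 * n = k * γ ^ 2 - α ^ 2 by linarith]
    exact dvd_sub (dvd_mul_of_dvd_right (pow_dvd_pow_of_dvd hhγ 2) k) (pow_dvd_pow_of_dvd hhα 2)
  have hunit : IsUnit h := hsf h (sq h ▸ hhβ.pow_right.dvd_of_dvd_mul_left hsq)
  rw [Int.isUnit_iff] at hunit
  exact Int.isCoprime_iff_gcd_eq_one.mpr (by omega)

theorem jacobiSym_neg_eq_one_of_dvd (hsf : Squarefree n)
    (hsol : α ^ 2 + n * β ^ 2 = k * γ ^ 2) (hprim : Int.gcd α (Int.gcd β γ) = 1) {m : ℕ}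
    (hm : (m : ℤ) ∣ γ) : jacobiSym (-n) m = 1 := by
  have hα : Int.gcd α m = 1 := Int.isCoprime_iff_gcd_eq_one.mp
    ((isCoprime_left hsf hsol hprim).of_isCoprime_of_dvd_right hm)
  have hβ : Int.gcd β m = 1 := Int.isCoprime_iff_gcd_eq_one.mp
    ((isCoprime_right hsol hprim).of_isCoprime_of_dvd_right hm)
  have hcong : -n * β ^ 2 ≡ α ^ 2 [ZMOD m] :=
    Int.modEq_iff_dvd.mpr <| by
      rw [show α ^ 2 - -n * β ^ 2 = k * γ ^ 2 by linear_combination hsol]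
      exact dvd_mul_of_dvd_right (hm.trans (dvd_pow_self γ two_ne_zero)) k
  have := jacobiSym.mod_left' hcong
  rwa [jacobiSym.mul_left, jacobiSym.sq_one' hβ, jacobiSym.sq_one' hα, mul_one] at this

end SqAddMulSq

theorem jacobiSym_neg_one_eq_of_jacobiSym_neg_eq_one {a : ℤ} {b : ℕ} (h : jacobiSym (-a) b = 1) :
    jacobiSym (-1) b = jacobiSym a b := by
  rw [neg_eq_neg_one_mul, jacobiSym.mul_left] at h
  rcases Int.eq_one_or_neg_one_of_mul_eq_one' h with ⟨h₁, h₂⟩ | ⟨h₁, h₂⟩ <;> rw [h₁, h₂]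

theorem jacobiSym_natAbs_eq_of_mod_four_eq_one {a : ℕ} (ha : a % 4 = 1) {b : ℤ} (hb : Odd b) :
    jacobiSym a b.natAbs = jacobiSym b a := by
  rw [jacobiSym.quadratic_reciprocity_one_mod_four ha (Int.natAbs_odd.mpr hb)]
  obtain ⟨c, rfl | rfl⟩ := Int.eq_nat_or_neg b
  · rw [Int.natAbs_natCast]
  · have hodd : Odd a := Nat.odd_iff.mpr (by omega)
    rw [Int.natAbs_neg, Int.natAbs_natCast, neg_eq_neg_one_mul, jacobiSym.mul_left,
      jacobiSym.at_neg_one hodd, ZMod.χ₄_nat_one_mod_four ha, one_mul]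

theorem stmt13_general (n α β γ : ℤ) (hn : 0 < n) (hsf : Squarefree n) (hn8 : n % 8 = 1)
    (hsol : α ^ 2 + n * β ^ 2 = 2 * γ ^ 2) (hprim : Int.gcd α (Int.gcd β γ) = 1)
    (hγ : Odd γ) :
    jacobiSym (-n) γ.natAbs = 1 ∧
      (∀ p : ℕ, p.Prime → Odd p → (p : ℤ) ∣ γ → IsSquare ((-n : ℤ) : ZMod p)) ∧
      jacobiSym (-1) γ.natAbs = jacobiSym γ n.natAbs := by
  have hJ : ∀ m : ℕ, (m : ℤ) ∣ γ → jacobiSym (-n) m = 1 := fun m hm =>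
    SqAddMulSq.jacobiSym_neg_eq_one_of_dvd hsf hsol hprim hm
  have hγJ := hJ γ.natAbs Int.natAbs_dvd_self
  refine ⟨hγJ, fun p hp _ hpγ => ?_, ?_⟩
  · have := Fact.mk hp
    exact ZMod.isSquare_of_jacobiSym_eq_one (hJ p hpγ)
  · lift n to ℕ using hn.le
    rw [jacobiSym_neg_one_eq_of_jacobiSym_neg_eq_one hγJ,
      jacobiSym_natAbs_eq_of_mod_four_eq_one (by omega) hγ, Int.natAbs_natCast]

theorem stmt13 (n α β γ d : ℤ) (hn : 0 < n) (hsf : Squarefree n) (hn8 : n % 8 = 1)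
    (hsol : α ^ 2 + n * β ^ 2 = 2 * γ ^ 2) (hprim : Int.gcd α (Int.gcd β γ) = 1)
    (hγ : Odd γ) (hd : d ∣ n) (hd8 : d % 8 = 7) :
    jacobiSym (-n) γ.natAbs = 1 ∧
      (∀ p : ℕ, p.Prime → Odd p → (p : ℤ) ∣ γ → IsSquare ((-n : ℤ) : ZMod p)) ∧
      jacobiSym (-1) γ.natAbs = jacobiSym γ n.natAbs :=
  stmt13_general n α β γ hn hsf hn8 hsol hprim hγ
end

section
/- Let p₁, ..., p_k be distinct odd primes each congruent to ±1 modulo 8 with p₁⋯p_k ≡ 1 (mod 8), and let A be the k×k F₂-matrix with off-diagonal entries a_ij = [p_j/p_i] (additive Legendre symbol) and diagonal a_ii = Σ_{l≠i} a_il. Let D be the diagonal F₂-matrix with entries [(-1)/p_i]. Then for any x ∈ F₂ᵏ, Ax = 0 if and only if xᵀ(A + D) = 0; in particular rank A = rank(A + D). -/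
/-- The additive Legendre symbol `[q/p] ∈ F₂`: `1` if `q` is a quadratic nonresidue
modulo `p` and `0` if it is a residue. -/
noncomputable def addLeg (q p : ℕ) : ZMod 2 :=
  open scoped Classical in
  if IsSquare ((q : ZMod p)) then 0 else 1

/-- The additive symbol `[-1/p]`. -/
noncomputable def addLegNegOne (p : ℕ) : ZMod 2 :=
  open scoped Classical in
  if IsSquare ((-1 : ZMod p)) then 0 else 1

/-!
Write `ε` for the vector of the symbols `[-1/pᵢ]`. Quadratic reciprocity gives
`aᵢⱼ + aⱼᵢ = εᵢεⱼ` for `i ≠ j`, and `εᵢ² = εᵢ`, so `(A + D)ᵀ = A + εεᵀ`. The rows of `A` sum to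
zero by the choice of its diagonal, and `∑ εᵢ = 0` because `p₁⋯p_k ≡ 1 (mod 4)`; together these
give `1ᵀA = ε`. Hence `(A + D)ᵀx = Ax + (ε·x)ε` with `ε·x = 1ᵀ(Ax)`, so `Ax` and `(A + D)ᵀx`
vanish together, and equal kernels give equal ranks.
-/

open Matrix

theorem addLegNegOne_eq {p : ℕ} (hp : p.Prime) :
    addLegNegOne p = if p % 4 = 3 then 1 else 0 := by
  have := Fact.mk hp
  by_cases h : p % 4 = 3 <;> simp [addLegNegOne, ZMod.exists_sq_eq_neg_one_iff, h]

theorem addLeg_eq_addLeg_of_mod_four_eq_one {q r : ℕ} (hq : q.Prime) (hr : r.Prime)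
    (hq1 : q % 4 = 1) (hr2 : r ≠ 2) : addLeg r q = addLeg q r := by
  have := Fact.mk hq
  have := Fact.mk hr
  by_cases h : IsSquare (q : ZMod r) <;>
    simp [addLeg, ZMod.exists_sq_eq_prime_iff_of_mod_four_eq_one hq1 hr2, h]

theorem addLeg_add_addLeg_of_mod_four_eq_three {q r : ℕ} (hq : q.Prime) (hr : r.Prime)
    (hq3 : q % 4 = 3) (hr3 : r % 4 = 3) (hne : q ≠ r) : addLeg r q + addLeg q r = 1 := by
  have := Fact.mk hq
  have := Fact.mk hr
  simp only [addLeg, ZMod.exists_sq_eq_prime_iff_of_mod_four_eq_three hq3 hr3 hne]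
  split_ifs <;> decide

theorem addLeg_add_addLeg {q r : ℕ} (hq : q.Prime) (hr : r.Prime) (hq2 : q ≠ 2) (hr2 : r ≠ 2)
    (hne : q ≠ r) : addLeg r q + addLeg q r = addLegNegOne q * addLegNegOne r := by
  have hq4 : q % 4 = 1 ∨ q % 4 = 3 := by have := Nat.odd_iff.1 (hq.odd_of_ne_two hq2); omega
  have hr4 : r % 4 = 1 ∨ r % 4 = 3 := by have := Nat.odd_iff.1 (hr.odd_of_ne_two hr2); omega
  rw [addLegNegOne_eq hq, addLegNegOne_eq hr]
  rcases hq4 with hq4 | hq4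
  · rw [addLeg_eq_addLeg_of_mod_four_eq_one hq hr hq4 hr2, CharTwo.add_self_eq_zero]
    simp [hq4]
  rcases hr4 with hr4 | hr4
  · rw [← addLeg_eq_addLeg_of_mod_four_eq_one hr hq hr4 hq2, CharTwo.add_self_eq_zero]
    simp [hr4]
  · rw [addLeg_add_addLeg_of_mod_four_eq_three hq hr hq4 hr4 hne]
    simp [hq4, hr4]

theorem natCast_zmod_four_eq_neg_one_pow {p : ℕ} (hp : p.Prime) (hp2 : p ≠ 2) :
    (p : ZMod 4) = (-1) ^ (addLegNegOne p).val := by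
  have := Nat.odd_iff.1 (hp.odd_of_ne_two hp2)
  have hp4 : p % 4 = 1 ∨ p % 4 = 3 := by omega
  rw [addLegNegOne_eq hp, ← ZMod.natCast_mod p 4]
  rcases hp4 with h | h <;> rw [h] <;> rfl

theorem sum_addLegNegOne_eq_zero {ι : Type*} (s : Finset ι) (p : ι → ℕ)
    (hp : ∀ i ∈ s, (p i).Prime) (hp2 : ∀ i ∈ s, p i ≠ 2) (h : (∏ i ∈ s, p i) % 4 = 1) :
    ∑ i ∈ s, addLegNegOne (p i) = 0 := by
  have hpow : (-1 : ZMod 4) ^ (∑ i ∈ s, (addLegNegOne (p i)).val) = 1 := by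
    rw [← Finset.prod_pow_eq_pow_sum,
      ← Finset.prod_congr rfl fun i hi => natCast_zmod_four_eq_neg_one_pow (hp i hi) (hp2 i hi),
      ← Nat.cast_prod, ← ZMod.natCast_mod, h, Nat.cast_one]
  have heven := (neg_one_pow_eq_one_iff_even (by decide)).1 hpow
  rw [← ZMod.natCast_eq_zero_iff_even] at heven
  simpa [ZMod.natCast_val] using heven

namespace Matrix

variable {m n R : Type*}

theorem mulVec_one_eq_zero_of_diag_eq_sum_erase [Fintype n] [DecidableEq n] [Ring R] [CharP R 2]
    {A : Matrix n n R}
    (h : ∀ i, A i i = ∑ l ∈ Finset.univ.erase i, A i l) : A *ᵥ 1 = 0 := by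
  ext i
  simp only [mulVec, dotProduct, Pi.one_apply, mul_one, Pi.zero_apply]
  rw [← Finset.add_sum_erase _ _ (Finset.mem_univ i), ← h i, CharTwo.add_self_eq_zero]

theorem transpose_add_diagonal_eq [DecidableEq n] (A : Matrix n n (ZMod 2)) (u : n → ZMod 2)
    (h : ∀ i j, i ≠ j → A i j + A j i = u i * u j) :
    (A + diagonal u)ᵀ = A + vecMulVec u u := by
  ext i j
  rcases eq_or_ne i j with rfl | hij
  · simp [vecMulVec, ← sq, ZMod.pow_card]
  · simp only [transpose_apply, add_apply, diagonal_apply_ne _ hij.symm, add_zero, vecMulVec_apply]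
    rw [mul_comm, ← h j i hij.symm, add_comm (A j i), ← add_assoc, CharTwo.add_self_eq_zero,
      zero_add]

section CommRing

variable [Fintype n] [DecidableEq n] [CommRing R] {A : Matrix n n R} {u : n → R}

theorem one_vecMul_eq_neg (hT : (A + diagonal u)ᵀ = A + vecMulVec u u) (hA : A *ᵥ 1 = 0)
    (hu : ∑ i, u i = 0) : 1 ᵥ* A = -u := by
  have hAT : Aᵀ = A + vecMulVec u u - diagonal u := by
    rw [← hT, transpose_add, diagonal_transpose, add_sub_cancel_right]
  rw [← mulVec_transpose, hAT, sub_mulVec, add_mulVec, hA, vecMulVec_mulVec, dotProduct_one, hu]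
  ext i
  simp [mulVec_diagonal]

theorem mulVec_eq_zero_iff_vecMul_add_diagonal_eq_zero
    (hT : (A + diagonal u)ᵀ = A + vecMulVec u u) (hA : A *ᵥ 1 = 0) (hu : ∑ i, u i = 0)
    (x : n → R) : A *ᵥ x = 0 ↔ x ᵥ* (A + diagonal u) = 0 := by
  have hux : u ⬝ᵥ x = -(1 ⬝ᵥ A *ᵥ x) := by
    rw [dotProduct_mulVec, one_vecMul_eq_neg hT hA hu, neg_dotProduct, neg_neg]
  rw [← mulVec_transpose, hT, add_mulVec, vecMulVec_mulVec, op_smul_eq_smul]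
  constructor
  · intro hAx
    rw [hux, hAx, dotProduct_zero, neg_zero, zero_smul, add_zero]
  · intro h
    have hAx : A *ᵥ x = -((u ⬝ᵥ x) • u) := eq_neg_of_add_eq_zero_left h
    have hux0 : u ⬝ᵥ x = 0 := by
      rw [hux, hAx, dotProduct_neg, dotProduct_smul, one_dotProduct, hu, smul_zero, neg_neg]
    rw [hAx, hux0, zero_smul, neg_zero]

end CommRing

theorem rank_eq_of_mulVec_eq_zero_iff [Fintype n] {K : Type*} [Field K] {A B : Matrix m n K}
    (h : ∀ x, A *ᵥ x = 0 ↔ B *ᵥ x = 0) : A.rank = B.rank := by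
  have hker : LinearMap.ker A.mulVecLin = LinearMap.ker B.mulVecLin := by
    ext x
    simpa using h x
  have hA := LinearMap.finrank_range_add_finrank_ker A.mulVecLin
  have hB := LinearMap.finrank_range_add_finrank_ker B.mulVecLin
  rw [hker] at hA
  rw [rank, rank]
  omega

end Matrix

theorem stmt15_general (k : ℕ) (p : Fin k → ℕ) (hp : ∀ i, (p i).Prime)
    (hinj : Function.Injective p)
    (h8 : ∀ i, p i % 8 = 1 ∨ p i % 8 = 7) (hn : (∏ i, p i) % 8 = 1)
    (A : Matrix (Fin k) (Fin k) (ZMod 2))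
    (hAoff : ∀ i j, i ≠ j → A i j = addLeg (p j) (p i))
    (hAdiag : ∀ i, A i i = ∑ l ∈ Finset.univ.erase i, A i l)
    (D : Matrix (Fin k) (Fin k) (ZMod 2))
    (hD : D = Matrix.diagonal (fun i => addLegNegOne (p i))) :
    (∀ x : Fin k → ZMod 2, A.mulVec x = 0 ↔ Matrix.vecMul x (A + D) = 0) ∧
      A.rank = (A + D).rank := by
  set ε : Fin k → ZMod 2 := fun i => addLegNegOne (p i)
  have hp2 : ∀ i, p i ≠ 2 := fun i => by have := h8 i; omega
  have hrecip : ∀ i j, i ≠ j → A i j + A j i = ε i * ε j := fun i j hij => by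
    rw [hAoff i j hij, hAoff j i hij.symm]
    exact addLeg_add_addLeg (hp i) (hp j) (hp2 i) (hp2 j) (hinj.ne hij)
  have hε : ∑ i, ε i = 0 :=
    sum_addLegNegOne_eq_zero _ p (fun i _ => hp i) (fun i _ => hp2 i) (by omega)
  have hker : ∀ x, A *ᵥ x = 0 ↔ x ᵥ* (A + D) = 0 := hD ▸
    mulVec_eq_zero_iff_vecMul_add_diagonal_eq_zero (transpose_add_diagonal_eq A ε hrecip)
      (mulVec_one_eq_zero_of_diag_eq_sum_erase hAdiag) hε
  refine ⟨hker, ?_⟩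
  rw [← rank_transpose (A + D)]
  exact rank_eq_of_mulVec_eq_zero_iff fun x => by rw [hker, mulVec_transpose]

theorem stmt15 (k : ℕ) (p : Fin k → ℕ) (hp : ∀ i, (p i).Prime)
    (hinj : Function.Injective p) (hodd : ∀ i, p i % 2 = 1)
    (h8 : ∀ i, p i % 8 = 1 ∨ p i % 8 = 7) (hn : (∏ i, p i) % 8 = 1)
    (A : Matrix (Fin k) (Fin k) (ZMod 2))
    (hAoff : ∀ i j, i ≠ j → A i j = addLeg (p j) (p i))
    (hAdiag : ∀ i, A i i = ∑ l ∈ Finset.univ.erase i, A i l)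
    (D : Matrix (Fin k) (Fin k) (ZMod 2))
    (hD : D = Matrix.diagonal (fun i => addLegNegOne (p i))) :
    (∀ x : Fin k → ZMod 2, A.mulVec x = 0 ↔ Matrix.vecMul x (A + D) = 0) ∧
      A.rank = (A + D).rank :=
  stmt15_general k p hp hinj h8 hn A hAoff hAdiag D hD
end

section
/- Let A be a symmetric k×k matrix over F₂ and D₂ a diagonal k×k F₂-matrix. Let M be the 2k×2k block matrix [[A + D₂, D₂],[D₂, A + D₂]]. If (X, Y) ∈ ker M then A(X + Y) = 0; moreover rank A = k - 1, A z₀ = 0 (z₀ all-ones), D₂ z₀ ∈ Im A imply 2·rank A ≤ rank M ≤ (k-1) + rank A. -/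
theorem stmt17 (k : ℕ) (A D₂ : Matrix (Fin k) (Fin k) (ZMod 2))
    (hsymm : A.IsSymm) (hdiag : ∃ d : Fin k → ZMod 2, D₂ = Matrix.diagonal d)
    (M : Matrix (Fin k ⊕ Fin k) (Fin k ⊕ Fin k) (ZMod 2))
    (hM : M = Matrix.fromBlocks (A + D₂) D₂ D₂ (A + D₂)) :
    (∀ X Y : Fin k → ZMod 2, M.mulVec (Sum.elim X Y) = 0 → A.mulVec (X + Y) = 0) ∧
      (A.rank = k - 1 → A.mulVec (fun _ => 1) = 0 →
        D₂.mulVec (fun _ => 1) ∈ Set.range A.mulVec →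
        2 * A.rank ≤ M.rank ∧ M.rank ≤ (k - 1) + A.rank) := by
  have addself : ∀ x : Fin k → ZMod 2, x + x = 0 := by
    intro x; funext i
    exact (by decide : ∀ a : ZMod 2, a + a = 0) (x i)
  -- key : from membership in kernel, get the two equations
  have key : ∀ X Y : Fin k → ZMod 2, M.mulVec (Sum.elim X Y) = 0 →
      A.mulVec (X + Y) = 0 ∧ A.mulVec Y = D₂.mulVec (X + Y) := by
    intro X Y h
    rw [hM, Matrix.fromBlocks_mulVec] at h
    have h1 : A.mulVec X + D₂.mulVec X + D₂.mulVec Y = 0 := by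
      have : (A + D₂).mulVec X + D₂.mulVec Y = 0 := funext fun i => congrFun h (Sum.inl i)
      rw [Matrix.add_mulVec] at this
      linear_combination this
    have h2 : D₂.mulVec X + A.mulVec Y + D₂.mulVec Y = 0 := by
      have : D₂.mulVec X + (A + D₂).mulVec Y = 0 := funext fun i => congrFun h (Sum.inr i)
      rw [Matrix.add_mulVec] at this
      linear_combination this
    constructor
    · simp only [Matrix.mulVec_add]
      linear_combination h1 + h2 - addself (D₂.mulVec X) - addself (D₂.mulVec Y)
    · simp only [Matrix.mulVec_add]
      linear_combination h2 - addself (D₂.mulVec X) - addself (D₂.mulVec Y)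
  refine ⟨fun X Y h => (key X Y h).1, ?_⟩
  intro hrank hz hD
  rcases Nat.eq_zero_or_pos k with hk | hk
  · subst hk
    have hMr : M.rank = 0 := Nat.le_zero.mp (by simpa using M.rank_le_card_width)
    have hAr : A.rank = 0 := Nat.le_zero.mp (by simpa using A.rank_le_card_width)
    omega
  -- z₀
  set z₀ : Fin k → ZMod 2 := fun _ => 1 with hz₀
  have hz₀ne : z₀ ≠ 0 := by
    intro hc
    have := congrFun hc ⟨0, hk⟩
    simp [hz₀] at this
  -- kernel of A is the span of z₀
  have hle : Submodule.span (ZMod 2) {z₀} ≤ LinearMap.ker A.mulVecLin := by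
    rw [Submodule.span_le, Set.singleton_subset_iff]
    simpa [LinearMap.mem_ker] using hz
  have hrn := LinearMap.finrank_range_add_finrank_ker A.mulVecLin
  rw [Module.finrank_fintype_fun_eq_card, Fintype.card_fin] at hrn
  have hAr : Module.finrank (ZMod 2) (LinearMap.range A.mulVecLin) = k - 1 := hrank
  have hkerfr : Module.finrank (ZMod 2) (LinearMap.ker A.mulVecLin) = 1 := by omega
  have hkerA : LinearMap.ker A.mulVecLin = Submodule.span (ZMod 2) {z₀} :=
    (Submodule.eq_of_le_of_finrank_eq hle
      (by rw [finrank_span_singleton hz₀ne, hkerfr])).symm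
  have hA0 : ∀ S : Fin k → ZMod 2, A.mulVec S = 0 → S = 0 ∨ S = z₀ := by
    intro S hS
    have : S ∈ Submodule.span (ZMod 2) {z₀} := by
      rw [← hkerA]; simpa [LinearMap.mem_ker] using hS
    rcases Submodule.mem_span_singleton.mp this with ⟨c, hc⟩
    rcases (by decide : ∀ c : ZMod 2, c = 0 ∨ c = 1) c with h | h <;> subst h
    · left; rw [← hc, zero_smul]
    · right; rw [← hc, one_smul]
  obtain ⟨Y₀, hY₀⟩ := hD
  set v₁ : Fin k ⊕ Fin k → ZMod 2 := Sum.elim z₀ z₀ with hv₁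
  set v₂ : Fin k ⊕ Fin k → ZMod 2 := Sum.elim (Y₀ + z₀) Y₀ with hv₂
  -- kernel of M is the span of v₁, v₂
  have hMv : ∀ X Y : Fin k → ZMod 2,
      A.mulVec X + D₂.mulVec X + D₂.mulVec Y = 0 →
      D₂.mulVec X + A.mulVec Y + D₂.mulVec Y = 0 →
      M.mulVec (Sum.elim X Y) = 0 := by
    intro X Y e1 e2
    rw [hM, Matrix.fromBlocks_mulVec]
    funext x
    cases x with
    | inl i =>
      have : (A + D₂).mulVec X + D₂.mulVec Y = 0 := by
        rw [Matrix.add_mulVec]; linear_combination e1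
      exact congrFun this i
    | inr i =>
      have : D₂.mulVec X + (A + D₂).mulVec Y = 0 := by
        rw [Matrix.add_mulVec]; linear_combination e2
      exact congrFun this i
  have hv₁mem : v₁ ∈ LinearMap.ker M.mulVecLin := by
    rw [LinearMap.mem_ker, Matrix.mulVecLin_apply]
    apply hMv <;> [skip; skip] <;>
      · linear_combination hz + addself (D₂.mulVec z₀)
  have hv₂mem : v₂ ∈ LinearMap.ker M.mulVecLin := by
    rw [LinearMap.mem_ker, Matrix.mulVecLin_apply]
    apply hMv
    · simp only [Matrix.mulVec_add]
      linear_combination hz + hY₀ + addself (D₂.mulVec Y₀) + addself (D₂.mulVec z₀)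
    · simp only [Matrix.mulVec_add]
      linear_combination hY₀ + addself (D₂.mulVec Y₀) + addself (D₂.mulVec z₀)
  have hkerM : LinearMap.ker M.mulVecLin = Submodule.span (ZMod 2) {v₁, v₂} := by
    apply le_antisymm
    · intro v hv
      set X : Fin k → ZMod 2 := fun i => v (Sum.inl i) with hX
      set Y : Fin k → ZMod 2 := fun i => v (Sum.inr i) with hY
      have hvXY : v = Sum.elim X Y := by funext x; cases x <;> rfl
      have hv0 : M.mulVec (Sum.elim X Y) = 0 := by
        rw [← hvXY]; simpa [LinearMap.mem_ker] using hv
      obtain ⟨hs, hy⟩ := key X Y hv0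
      rw [Submodule.mem_span_pair]
      rcases hA0 _ hs with hS | hS
      · -- X = Y
        have hXY : X = Y := by linear_combination hS - addself Y
        have : A.mulVec Y = 0 := by
          rw [hy, hS, Matrix.mulVec_zero]
        rcases hA0 _ this with h0 | h0
        · exact ⟨0, 0, by simp [hvXY, hXY, h0]⟩
        · refine ⟨1, 0, ?_⟩
          simp only [one_smul, zero_smul, add_zero, hvXY, hXY, h0, hv₁]
      · -- X + Y = z₀
        have hAy : A.mulVec (Y + Y₀) = 0 := by
          simp only [Matrix.mulVec_add]
          rw [hS] at hy
          linear_combination hy + hY₀ + addself (D₂.mulVec z₀)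
        rcases hA0 _ hAy with h0 | h0
        · -- Y = Y₀, X = z₀ + Y₀
          have hYY : Y = Y₀ := by linear_combination h0 - addself Y₀
          have hXX : X = Y₀ + z₀ := by
            rw [hYY] at hS; linear_combination hS - addself Y₀
          refine ⟨0, 1, ?_⟩
          simp only [one_smul, zero_smul, zero_add, hvXY, hXX, hYY, hv₂]
        · -- Y = Y₀ + z₀, X = Y₀
          have hYY : Y = Y₀ + z₀ := by linear_combination h0 - addself Y₀
          have hXX : X = Y₀ := by
            rw [hYY] at hS
            linear_combination hS - addself Y₀
          refine ⟨1, 1, ?_⟩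
          have e : ∀ a b : ZMod 2, a + (b + a) = b := by decide
          funext x
          cases x with
          | inl i =>
            simp only [hvXY, Pi.add_apply, Pi.smul_apply, one_smul, hv₁, hv₂,
              Sum.elim_inl, hXX]
            exact e (z₀ i) (Y₀ i)
          | inr i =>
            simp only [hvXY, Pi.add_apply, Pi.smul_apply, one_smul, hv₁, hv₂,
              Sum.elim_inr, hYY]
            exact add_comm (z₀ i) (Y₀ i)
    · rw [Submodule.span_le]
      intro x hx
      rcases Set.mem_insert_iff.mp hx with rfl | hx
      · exact hv₁mem
      · rw [Set.mem_singleton_iff] at hx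
        subst hx
        exact hv₂mem
  -- linear independence of v₁, v₂
  have e0 : ∀ c : ZMod 2, c = 0 ∨ c = 1 := by decide
  have hli : LinearIndependent (ZMod 2) ![v₁, v₂] := by
    rw [LinearIndependent.pair_iff]
    intro s t hst
    rcases e0 s with hs | hs <;> rcases e0 t with ht | ht <;> subst hs <;> subst ht
    · exact ⟨rfl, rfl⟩
    · exfalso
      rw [zero_smul, one_smul, zero_add] at hst
      have h1 := congrFun hst (Sum.inl ⟨0, hk⟩)
      have h2 := congrFun hst (Sum.inr ⟨0, hk⟩)
      simp only [hv₂, Sum.elim_inl, Sum.elim_inr, Pi.add_apply, Pi.zero_apply, hz₀] at h1 h2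
      rw [h2, zero_add] at h1
      simp at h1
    · exfalso
      rw [one_smul, zero_smul, add_zero] at hst
      have h := congrFun hst (Sum.inl ⟨0, hk⟩)
      simp [hv₁, hz₀] at h
    · exfalso
      rw [one_smul, one_smul] at hst
      have h1 := congrFun hst (Sum.inl ⟨0, hk⟩)
      have h2 := congrFun hst (Sum.inr ⟨0, hk⟩)
      simp only [hv₁, hv₂, Sum.elim_inl, Sum.elim_inr, Pi.add_apply, Pi.zero_apply, hz₀] at h1 h2
      rcases e0 (Y₀ ⟨0, hk⟩) with ha | ha
      · rw [ha, add_zero] at h2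
        simp at h2
      · rw [ha] at h1
        exact (by decide : ¬ ((1 : ZMod 2) + (1 + 1) = 0)) h1
  have hrange : (Set.range ![v₁, v₂]) = {v₁, v₂} := by
    ext y
    simp only [Set.mem_range, Fin.exists_fin_two, Matrix.cons_val_zero,
      Matrix.cons_val_one, Matrix.head_cons, Set.mem_insert_iff, Set.mem_singleton_iff]
    exact ⟨fun h => h.imp Eq.symm Eq.symm, fun h => h.imp Eq.symm Eq.symm⟩
  have hfr2 : Module.finrank (ZMod 2) (LinearMap.ker M.mulVecLin) = 2 := by
    rw [hkerM, ← hrange, finrank_span_eq_card hli, Fintype.card_fin]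
  have hrnM := LinearMap.finrank_range_add_finrank_ker M.mulVecLin
  rw [Module.finrank_fintype_fun_eq_card, Fintype.card_sum, Fintype.card_fin, hfr2] at hrnM
  have hMr : M.rank + 2 = k + k := hrnM
  omega
end
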